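/- Let v : 2^N → ℝ be supermodular with v(∅) = 0 on a finite player set N. Then the core of the game (N, v) is nonempty; moreover the Shapley value φ_i = (1/|N|!) Σ_π [v(P_π(i) ∪ {i}) − v(P_π(i))], the average of marginal-contribution vectors over all orderings π, lies in the core. -/

import Mathlib

/-!
Fix an ordering of the players and pay each player its marginal contribution to the set of
players preceding it. These payments telescope to `v N`, and supermodularity shows that every
coalition `S` receives at least `v S`: if `i` is the last member of `S`, then
`S \ {i}` lies inside the predecessors `P` of `i`, so `v S - v (S \ {i}) ≤ v (P ∪ {i}) - v P`.
Every marginal vector is therefore in the core, and so is their average, the Shapley value.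
-/

open Finset
open scoped BigOperators

variable {α β : Type*} [Fintype α] [LinearOrder β]

def predecessors (r : α → β) (i : α) : Finset α :=
  univ.filter fun j => r j < r i

lemma notMem_predecessors_self (r : α → β) (i : α) : i ∉ predecessors r i := by
  simp [predecessors]

variable [DecidableEq α]

def marginalContribution (v : Finset α → ℝ) (r : α → β) (i : α) : ℝ :=
  v (insert i (predecessors r i)) - v (predecessors r i)

lemma erase_subset_predecessors {r : α → β} (hr : Function.Injective r) {S : Finset α} {i : α}
    (hmax : ∀ j ∈ S, r j ≤ r i) : S.erase i ⊆ predecessors r i := by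
  intro j hj
  obtain ⟨hji, hjS⟩ := mem_erase.mp hj
  simpa [predecessors] using lt_of_le_of_ne (hmax j hjS) (hr.ne hji)

lemma sum_marginalContribution_of_predecessors_subset (v : Finset α → ℝ) {r : α → β}
    (hr : Function.Injective r) (S : Finset α) (hS : ∀ i ∈ S, predecessors r i ⊆ S) :
    ∑ i ∈ S, marginalContribution v r i = v S - v ∅ := by
  induction S using Finset.strongInduction with
  | _ S ih =>
    rcases S.eq_empty_or_nonempty with rfl | hne
    · simp
    obtain ⟨i, hi, hmax⟩ := S.exists_max_image r hne
    have hpred : S.erase i = predecessors r i :=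
      (erase_subset_predecessors hr hmax).antisymm fun j hj =>
        mem_erase.mpr ⟨ne_of_mem_of_not_mem hj (notMem_predecessors_self r i), hS i hi hj⟩
    have hclosed : ∀ j ∈ S.erase i, predecessors r j ⊆ S.erase i := by
      rw [hpred]
      intro j hj k hk
      simp only [predecessors, mem_filter, mem_univ, true_and] at hj hk ⊢
      exact hk.trans hj
    rw [← add_sum_erase S _ hi, ih _ (erase_ssubset hi) hclosed, marginalContribution,
      ← hpred, insert_erase hi]
    ring

lemma sum_marginalContribution (v : Finset α → ℝ) {r : α → β} (hr : Function.Injective r) :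
    ∑ i, marginalContribution v r i = v univ - v ∅ :=
  sum_marginalContribution_of_predecessors_subset v hr univ fun _ _ => subset_univ _

lemma sub_le_sum_marginalContribution {v : Finset α → ℝ}
    (hsup : ∀ S T : Finset α, v S + v T ≤ v (S ∪ T) + v (S ∩ T))
    {r : α → β} (hr : Function.Injective r) (S : Finset α) :
    v S - v ∅ ≤ ∑ i ∈ S, marginalContribution v r i := by
  induction S using Finset.strongInduction with
  | _ S ih =>
    rcases S.eq_empty_or_nonempty with rfl | hne
    · simp
    obtain ⟨i, hi, hmax⟩ := S.exists_max_image r hne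
    have hsub := erase_subset_predecessors hr hmax
    have hunion : S ∪ predecessors r i = insert i (predecessors r i) := by
      rw [← insert_erase hi, insert_union, union_eq_right.mpr hsub]
    have hinter : S ∩ predecessors r i = S.erase i := by
      nth_rewrite 1 [← insert_erase hi]
      rw [insert_inter_of_notMem (notMem_predecessors_self r i), inter_eq_left.mpr hsub]
    have hmarg := hsup S (predecessors r i)
    rw [hunion, hinter] at hmarg
    rw [← add_sum_erase S _ hi, marginalContribution]
    linarith [ih _ (erase_ssubset hi)]

lemma inv_factorial_mul_sum_perm_eq_expect (n : ℕ) (f : Equiv.Perm (Fin n) → ℝ) :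
    1 / (n.factorial : ℝ) * ∑ π, f π = 𝔼 π, f π := by
  rw [expect_eq_sum_div_card, card_univ, Fintype.card_perm, Fintype.card_fin]
  ring

theorem shapley_value_mem_core (n : ℕ) (v : Finset (Fin n) → ℝ) (hv0 : v ∅ = 0)
    (hsup : ∀ S T : Finset (Fin n), v S + v T ≤ v (S ∪ T) + v (S ∩ T)) :
    (∑ i : Fin n, (1 / (n.factorial : ℝ)) * ∑ π : Equiv.Perm (Fin n),
        (v (insert i (Finset.univ.filter fun j => π.symm j < π.symm i)) -
         v (Finset.univ.filter fun j => π.symm j < π.symm i)) = v Finset.univ) ∧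
    ∀ S : Finset (Fin n),
      v S ≤ ∑ i ∈ S, (1 / (n.factorial : ℝ)) * ∑ π : Equiv.Perm (Fin n),
        (v (insert i (Finset.univ.filter fun j => π.symm j < π.symm i)) -
         v (Finset.univ.filter fun j => π.symm j < π.symm i)) := by
  change (∑ i, 1 / (n.factorial : ℝ) *
      ∑ π : Equiv.Perm (Fin n), marginalContribution v π.symm i = v univ) ∧
    ∀ S, v S ≤ ∑ i ∈ S, 1 / (n.factorial : ℝ) *
      ∑ π : Equiv.Perm (Fin n), marginalContribution v π.symm i
  simp only [inv_factorial_mul_sum_perm_eq_expect, ← expect_sum_comm]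
  refine ⟨?_, fun S => le_expect univ_nonempty fun π _ => ?_⟩
  · simp only [sum_marginalContribution v (Equiv.injective _), hv0, sub_zero]
    exact expect_const univ_nonempty _
  · simpa [hv0] using sub_le_sum_marginalContribution hsup π.symm.injective S
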